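/- Let W, H be positive integers, let μ_w, μ_h ∈ (0,1), and let B_1,…,B_m be axis-aligned rectangular regions with pairwise disjoint interiors, each contained in [0,W]×[0,H]. Let S be a finite family of rectangles, each of width at most μ_w·W and height at most μ_h·H, and suppose a(S) is at most the total area of B_1,…,B_m. Then there exist a subfamily S' ⊆ S and a feasible packing of S' in which each rectangle of S' lies inside one of the regions B_1,…,B_m and the packed open rectangles are pairwise disjoint, such that a(S ∖ S') ≤ m·(μ_w·μ_h·W·H + μ_h·H·W + μ_w·W·H). -/

import Mathlib

/-!
Fill the regions one after another by the shelf algorithm, taking the rectangles in order of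
decreasing height: a shelf is as tall as its first rectangle and is filled left to right until
the next rectangle no longer fits, and the next shelf is stacked on top of it. If a region
`a × b` does not absorb all remaining rectangles, every closed shelf has width more than
`a - ω` and consists of rectangles at least as tall as the next shelf, so the region receives
area at least `(a - ω)(b - η) ≥ ab - ωH - ηW`, where `ω = μ_w W` and `η = μ_h H` bound the
rectangle sizes. Summing over the `m` regions and using `a(S) ≤ ∑ ab` leaves unpacked area at
most `m (ωH + ηW)`.
-/

open scoped Classical

/-- Open axis-aligned rectangles (real coordinates) `(x₁, x₁+w₁) × (y₁, y₁+h₁)` and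
`(x₂, x₂+w₂) × (y₂, y₂+h₂)` are disjoint. -/
def RectDisjointR (x₁ y₁ w₁ h₁ x₂ y₂ w₂ h₂ : ℝ) : Prop :=
  x₁ + w₁ ≤ x₂ ∨ x₂ + w₂ ≤ x₁ ∨ y₁ + h₁ ≤ y₂ ∨ y₂ + h₂ ≤ y₁

/-- Two axis-aligned rectangular regions (real coordinates) have disjoint interiors. -/
def RegionDisjoint (cx cy cw ch cx' cy' cw' ch' : ℝ) : Prop :=
  cx + cw ≤ cx' ∨ cx' + cw' ≤ cx ∨ cy + ch ≤ cy' ∨ cy' + ch' ≤ cy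

open Finset

theorem RectDisjointR.symm {x₁ y₁ w₁ h₁ x₂ y₂ w₂ h₂ : ℝ}
    (hd : RectDisjointR x₁ y₁ w₁ h₁ x₂ y₂ w₂ h₂) : RectDisjointR x₂ y₂ w₂ h₂ x₁ y₁ w₁ h₁ := by
  unfold RectDisjointR at *
  tauto

theorem RegionDisjoint.rectDisjointR {cx cy cw ch cx' cy' cw' ch' x y w h x' y' w' h' : ℝ}
    (hd : RegionDisjoint cx cy cw ch cx' cy' cw' ch')
    (hin : cx ≤ x ∧ x + w ≤ cx + cw ∧ cy ≤ y ∧ y + h ≤ cy + ch)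
    (hin' : cx' ≤ x' ∧ x' + w' ≤ cx' + cw' ∧ cy' ≤ y' ∧ y' + h' ≤ cy' + ch') :
    RectDisjointR x y w h x' y' w' h' := by
  unfold RegionDisjoint at hd
  unfold RectDisjointR
  rcases hd with hd | hd | hd | hd
  · exact Or.inl (by linarith)
  · exact Or.inr <| Or.inl (by linarith)
  · exact Or.inr <| Or.inr <| Or.inl (by linarith)
  · exact Or.inr <| Or.inr <| Or.inr (by linarith)

namespace RectPacking

variable {ι : Type*} (w h : ι → ℝ)

def PlacedIn (x y : ι → ℝ) (P : Finset ι) (x₀ y₀ a b : ℝ) : Prop :=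
  ∀ i ∈ P, x₀ ≤ x i ∧ x i + w i ≤ x₀ + a ∧ y₀ ≤ y i ∧ y i + h i ≤ y₀ + b

def NonOverlapping (x y : ι → ℝ) (P : Finset ι) : Prop :=
  (P : Set ι).Pairwise fun i j => RectDisjointR (x i) (y i) (w i) (h i) (x j) (y j) (w j) (h j)

variable {w h}

theorem PlacedIn.mono {x y : ι → ℝ} {P : Finset ι} {x₀ y₀ a b x₁ y₁ a' b' : ℝ}
    (hP : PlacedIn w h x y P x₀ y₀ a b) (hx : x₁ ≤ x₀) (hy : y₁ ≤ y₀) (ha : x₀ + a ≤ x₁ + a')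
    (hb : y₀ + b ≤ y₁ + b') : PlacedIn w h x y P x₁ y₁ a' b' := fun i hi => by
  obtain ⟨h₁, h₂, h₃, h₄⟩ := hP i hi
  exact ⟨by linarith, by linarith, by linarith, by linarith⟩

theorem PlacedIn.piecewise {x y x' y' : ι → ℝ} {P Q : Finset ι} {x₀ y₀ a b : ℝ}
    (hP : PlacedIn w h x y P x₀ y₀ a b) (hQ : PlacedIn w h x' y' Q x₀ y₀ a b) :
    PlacedIn w h (P.piecewise x x') (P.piecewise y y') (P ∪ Q) x₀ y₀ a b := by
  intro i hi
  by_cases hiP : i ∈ P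
  · simpa [hiP] using hP i hiP
  · simpa [hiP] using hQ i ((mem_union.1 hi).resolve_left hiP)

theorem NonOverlapping.piecewise {x y x' y' : ι → ℝ} {P Q : Finset ι}
    (hP : NonOverlapping w h x y P) (hQ : NonOverlapping w h x' y' Q)
    (hPQ : ∀ i ∈ P, ∀ j ∈ Q, RectDisjointR (x i) (y i) (w i) (h i) (x' j) (y' j) (w j) (h j)) :
    NonOverlapping w h (P.piecewise x x') (P.piecewise y y') (P ∪ Q) := by
  intro i hi j hj hij
  simp only [coe_union, Set.mem_union, mem_coe] at hi hj
  by_cases hiP : i ∈ P <;> by_cases hjP : j ∈ P <;>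
    simp only [piecewise_eq_of_mem, piecewise_eq_of_notMem, hiP, hjP, not_false_eq_true]
  · exact hP hiP hjP hij
  · exact hPQ i hiP j (hj.resolve_left hjP)
  · exact (hPQ j hjP i (hi.resolve_left hiP)).symm
  · exact hQ (hi.resolve_left hiP) (hj.resolve_left hjP) hij

theorem exists_row_layout (hw : ∀ i, 0 ≤ w i) (x₀ y₀ t : ℝ) (R : Finset ι)
    (hR : ∀ i ∈ R, h i ≤ t) :
    ∃ x : ι → ℝ, PlacedIn w h x (fun _ => y₀) R x₀ y₀ (∑ i ∈ R, w i) t ∧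
      NonOverlapping w h x (fun _ => y₀) R := by
  induction R using Finset.induction_on with
  | empty => exact ⟨fun _ => x₀, by simp [PlacedIn], by simp [NonOverlapping]⟩
  | insert j s hj ih =>
    obtain ⟨x, hxP, hxN⟩ := ih fun i hi => hR i (mem_insert_of_mem hi)
    have hsum : ∑ i ∈ s ∪ {j}, w i = ∑ i ∈ s, w i + w j := by
      rw [union_singleton, sum_insert hj, add_comm]
    have hs : 0 ≤ ∑ i ∈ s, w i := sum_nonneg fun i _ => hw i
    have hjP : PlacedIn w h (fun _ => x₀ + ∑ i ∈ s, w i) (fun _ => y₀) {j} x₀ y₀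
        (∑ i ∈ s ∪ {j}, w i) t := by
      simp only [PlacedIn, mem_singleton, forall_eq, hsum]
      exact ⟨by linarith, by linarith, le_rfl, by linarith [hR j (mem_insert_self j s)]⟩
    have hjN : NonOverlapping w h (fun _ => x₀ + ∑ i ∈ s, w i) (fun _ => y₀) {j} := by
      simp [NonOverlapping]
    refine ⟨s.piecewise x fun _ => x₀ + ∑ i ∈ s, w i, ?_⟩
    rw [← union_singleton, ← piecewise_same s (fun _ => y₀)]
    refine ⟨(hxP.mono le_rfl le_rfl (by linarith [hw j]) le_rfl).piecewise hjP,
      hxN.piecewise hjN fun i hi _ _ => Or.inl (hxP i hi).2.1⟩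

theorem exists_tallest_row {a ω : ℝ} (ha : 0 ≤ a) (hω : ∀ i, w i ≤ ω) (T : Finset ι) :
    ∃ R ⊆ T, ∑ i ∈ R, w i ≤ a ∧ (∀ i ∈ R, ∀ j ∈ T \ R, h j ≤ h i) ∧
      (R = T ∨ a - ω < ∑ i ∈ R, w i) := by
  induction T using Finset.induction_on_min_value h with
  | empty => exact ⟨∅, subset_refl _, by simpa using ha, by simp, Or.inl rfl⟩
  | insert j s hj hmin ih =>
    obtain ⟨R, hRs, hRa, hRh, rfl | hRω⟩ := ih
    · by_cases hfit : ∑ i ∈ R, w i + w j ≤ a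
      · exact ⟨insert j R, subset_refl _, by rwa [sum_insert hj, add_comm], by simp,
          Or.inl rfl⟩
      · refine ⟨R, subset_insert _ _, hRa, fun i hi k hk => ?_, Or.inr (by linarith [hω j])⟩
        obtain rfl : k = j := by simp only [mem_sdiff, mem_insert] at hk; tauto
        exact hmin i hi
    · refine ⟨R, hRs.trans (subset_insert _ _), hRa, fun i hi k hk => ?_, Or.inr hRω⟩
      rw [insert_sdiff_of_notMem _ (fun hjR => hj (hRs hjR)), mem_insert] at hk
      rcases hk with rfl | hk
      · exact hmin i (hRs hi)
      · exact hRh i hi k hk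

theorem mul_le_sum_area {c t : ℝ} (hw : ∀ i, 0 ≤ w i) (ht : 0 ≤ t) (R : Finset ι)
    (hwidth : c ≤ ∑ i ∈ R, w i) (htall : ∀ i ∈ R, t ≤ h i) :
    c * t ≤ ∑ i ∈ R, w i * h i :=
  calc c * t ≤ (∑ i ∈ R, w i) * t := mul_le_mul_of_nonneg_right hwidth ht
    _ = ∑ i ∈ R, w i * t := sum_mul _ _ _
    _ ≤ ∑ i ∈ R, w i * h i := sum_le_sum fun i hi => mul_le_mul_of_nonneg_left (htall i hi) (hw i)

theorem exists_shelf_packing (hw : ∀ i, 0 ≤ w i) (hh : ∀ i, 0 ≤ h i) {a ω : ℝ} (hω0 : 0 ≤ ω)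
    (hω : ∀ i, w i ≤ ω) (hωa : ω ≤ a) (x₀ : ℝ) (T : Finset ι) :
    ∀ y₀ b t : ℝ, (∀ i ∈ T, h i ≤ t) → ∃ P ⊆ T, ∃ x y : ι → ℝ,
      PlacedIn w h x y P x₀ y₀ a b ∧ NonOverlapping w h x y P ∧
      (P = T ∨ (a - ω) * (b - t) ≤ ∑ i ∈ P, w i * h i) := by
  induction T using Finset.strongInduction with
  | H T ih =>
  intro y₀ b t ht
  by_cases htb : b < t
  · refine ⟨∅, empty_subset _, 0, 0, by simp [PlacedIn], by simp [NonOverlapping], Or.inr ?_⟩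
    simpa using mul_nonpos_of_nonneg_of_nonpos (sub_nonneg.2 hωa) (by linarith)
  rw [not_lt] at htb
  obtain ⟨R, hRT, hRa, hRh, hRcover⟩ := exists_tallest_row (h := h) (hω0.trans hωa) hω T
  obtain ⟨xR, hRP, hRN⟩ := exists_row_layout hw x₀ y₀ t R fun i hi => ht i (hRT hi)
  have hRP' : PlacedIn w h xR (fun _ => y₀) R x₀ y₀ a b :=
    hRP.mono le_rfl le_rfl (by linarith) (by linarith)
  rcases (T \ R).eq_empty_or_nonempty with hrest | hrest
  · obtain rfl : R = T := le_antisymm hRT (sdiff_eq_empty_iff_subset.1 hrest)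
    exact ⟨R, subset_refl R, xR, _, hRP', hRN, Or.inl rfl⟩
  -- the next shelf is as tall as the tallest rectangle `j` not on the first one
  obtain ⟨j, hj, hjmax⟩ := exists_max_image (T \ R) h hrest
  have hRω : a - ω < ∑ i ∈ R, w i :=
    hRcover.resolve_left fun hRT' => by simp [hRT'] at hrest
  have hRne : R.Nonempty := nonempty_of_sum_ne_zero (f := w) (by linarith)
  obtain ⟨P, hPT, x, y, hPP, hPN, hPcover⟩ :=
    ih (T \ R) (sdiff_ssubset hRT hRne) (y₀ + t) (b - t) (h j) hjmax
  refine ⟨R ∪ P, union_subset hRT (hPT.trans sdiff_subset), R.piecewise xR x,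
    R.piecewise (fun _ => y₀) y, hRP'.piecewise (hPP.mono le_rfl ?_ le_rfl (by linarith)), ?_, ?_⟩
  · linarith [hh j, ht j (mem_sdiff.1 hj).1]
  · exact hRN.piecewise hPN fun i hi k hk =>
      Or.inr <| Or.inr <| Or.inl <| by linarith [(hRP i hi).2.2.2, (hPP k hk).2.2.1]
  · rcases hPcover with rfl | hPcover
    · exact Or.inl (union_sdiff_of_subset hRT)
    · right
      rw [sum_union (disjoint_sdiff.mono_right hPT)]
      have := mul_le_sum_area hw (hh j) R hRω.le fun i hi => hRh i hi j hj
      linarith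

theorem exists_packing_in_box (hw : ∀ i, 0 ≤ w i) (hh : ∀ i, 0 ≤ h i) {ω η : ℝ} (hω0 : 0 ≤ ω)
    (hη0 : 0 ≤ η) (hω : ∀ i, w i ≤ ω) (hη : ∀ i, h i ≤ η) (T : Finset ι) (x₀ y₀ : ℝ) {a b : ℝ}
    (ha : 0 ≤ a) (hb : 0 ≤ b) :
    ∃ P ⊆ T, ∃ x y : ι → ℝ, PlacedIn w h x y P x₀ y₀ a b ∧ NonOverlapping w h x y P ∧
      (P = T ∨ a * b - ω * b - η * a ≤ ∑ i ∈ P, w i * h i) := by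
  rcases lt_or_ge a ω with haω | hωa
  · refine ⟨∅, empty_subset _, 0, 0, by simp [PlacedIn], by simp [NonOverlapping], Or.inr ?_⟩
    simp only [sum_empty]
    nlinarith
  · obtain ⟨P, hPT, x, y, hPP, hPN, hPcover⟩ :=
      exists_shelf_packing hw hh hω0 hω hωa x₀ T y₀ b η fun i _ => hη i
    exact ⟨P, hPT, x, y, hPP, hPN, hPcover.imp_right fun hP => by nlinarith⟩

theorem exists_packing_in_regions (hw : ∀ i, 0 ≤ w i) (hh : ∀ i, 0 ≤ h i) {ω η W H : ℝ}
    (hω0 : 0 ≤ ω) (hη0 : 0 ≤ η) (hω : ∀ i, w i ≤ ω) (hη : ∀ i, h i ≤ η)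
    (bx bY bw bh : ℕ → ℝ) (n : ℕ)
    (hreg : ∀ k < n, 0 ≤ bw k ∧ bw k ≤ W ∧ 0 ≤ bh k ∧ bh k ≤ H)
    (hdisj : ∀ k < n, ∀ k' < n, k ≠ k' →
      RegionDisjoint (bx k) (bY k) (bw k) (bh k) (bx k') (bY k') (bw k') (bh k'))
    (T : Finset ι) :
    ∃ P ⊆ T, ∃ (x y : ι → ℝ) (c : ι → ℕ),
      (∀ i ∈ P, c i < n ∧ bx (c i) ≤ x i ∧ x i + w i ≤ bx (c i) + bw (c i) ∧
        bY (c i) ≤ y i ∧ y i + h i ≤ bY (c i) + bh (c i)) ∧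
      NonOverlapping w h x y P ∧
      (P = T ∨ ∑ k ∈ range n, bw k * bh k - n * (ω * H + η * W) ≤ ∑ i ∈ P, w i * h i) := by
  induction n with
  | zero =>
    exact ⟨∅, empty_subset _, 0, 0, 0, by simp, by simp [NonOverlapping], Or.inr (by simp)⟩
  | succ n ih =>
    obtain ⟨P, hPT, x, y, c, hPP, hPN, rfl | hPcover⟩ :=
      ih (fun k hk => hreg k (by omega)) fun k hk k' hk' => hdisj k (by omega) k' (by omega)
    · exact ⟨P, subset_refl P, x, y, c, fun i hi => ⟨by linarith [(hPP i hi).1], (hPP i hi).2⟩,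
        hPN, Or.inl rfl⟩
    obtain ⟨hbw0, hbwW, hbh0, hbhH⟩ := hreg n n.lt_succ_self
    obtain ⟨Q, hQT, x', y', hQP, hQN, hQcover⟩ :=
      exists_packing_in_box hw hh hω0 hη0 hω hη (T \ P) (bx n) (bY n) hbw0 hbh0
    refine ⟨P ∪ Q, union_subset hPT (hQT.trans sdiff_subset), P.piecewise x x',
      P.piecewise y y', P.piecewise c fun _ => n, fun i hi => ?_, hPN.piecewise hQN ?_, ?_⟩
    · by_cases hiP : i ∈ P
      · simpa [hiP, Nat.lt_succ_of_lt (hPP i hiP).1] using (hPP i hiP).2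
      · simpa [hiP] using hQP i ((mem_union.1 hi).resolve_left hiP)
    · intro i hi j hj
      have hci := (hPP i hi).1
      exact (hdisj _ (by omega) n (by omega) hci.ne).rectDisjointR (hPP i hi).2 (hQP j hj)
    · rcases hQcover with rfl | hQcover
      · exact Or.inl (union_sdiff_of_subset hPT)
      right
      rw [sum_union (disjoint_sdiff.mono_right hQT), sum_range_succ]
      push_cast
      nlinarith

end RectPacking

theorem small_rectangles_packing_general
    (W H : ℕ)
    (μw μh : ℝ) (hμw : μw ∈ Set.Ioo (0 : ℝ) 1) (hμh : μh ∈ Set.Ioo (0 : ℝ) 1)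
    (m : ℕ) (bx bY bw bh : ℕ → ℝ)
    (hreg : ∀ k < m, 0 ≤ bx k ∧ 0 ≤ bY k ∧ 0 ≤ bw k ∧ 0 ≤ bh k ∧
      bx k + bw k ≤ W ∧ bY k + bh k ≤ H)
    (hdisj : ∀ k < m, ∀ k' < m, k ≠ k' →
      RegionDisjoint (bx k) (bY k) (bw k) (bh k) (bx k') (bY k') (bw k') (bh k'))
    (ι : Type*) [Fintype ι] (w h : ι → ℕ)
    (hsmall : ∀ i, (w i : ℝ) ≤ μw * W ∧ (h i : ℝ) ≤ μh * H)
    (harea : (∑ i, (w i : ℝ) * h i) ≤ ∑ k ∈ Finset.range m, bw k * bh k) :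
    ∃ (S : Finset ι) (x y : ι → ℝ) (c : ι → ℕ),
      (∀ i ∈ S, c i < m ∧
        bx (c i) ≤ x i ∧ x i + w i ≤ bx (c i) + bw (c i) ∧
        bY (c i) ≤ y i ∧ y i + h i ≤ bY (c i) + bh (c i)) ∧
      (∀ i ∈ S, ∀ j ∈ S, i ≠ j →
        RectDisjointR (x i) (y i) (w i) (h i) (x j) (y j) (w j) (h j)) ∧
      (∑ i ∈ Finset.univ \ S, (w i : ℝ) * h i) ≤
        m * (μw * μh * W * H + μh * H * W + μw * W * H) := by
  have hω0 : 0 ≤ μw * W := mul_nonneg hμw.1.le W.cast_nonneg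
  have hη0 : 0 ≤ μh * H := mul_nonneg hμh.1.le H.cast_nonneg
  have hbox : ∀ k < m, 0 ≤ bw k ∧ bw k ≤ W ∧ 0 ≤ bh k ∧ bh k ≤ H := fun k hk => by
    obtain ⟨hx, hy, hw, hh, hxw, hyh⟩ := hreg k hk
    exact ⟨hw, by linarith, hh, by linarith⟩
  obtain ⟨S, -, x, y, c, hplaced, hS, hcover⟩ :=
    RectPacking.exists_packing_in_regions (w := fun i => (w i : ℝ)) (h := fun i => (h i : ℝ))
      (fun i => (w i).cast_nonneg) (fun i => (h i).cast_nonneg) hω0 hη0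
      (fun i => (hsmall i).1) (fun i => (hsmall i).2) bx bY bw bh m hbox hdisj univ
  refine ⟨S, x, y, c, hplaced, fun i hi j hj hij => hS hi hj hij, ?_⟩
  have hslack : (m : ℝ) * (μw * W * H + μh * H * W) ≤
      m * (μw * μh * W * H + μh * H * W + μw * W * H) := by
    nlinarith [mul_nonneg (mul_nonneg m.cast_nonneg hω0) hη0]
  have hloss : 0 ≤ (m : ℝ) * (μw * W * H + μh * H * W) :=
    mul_nonneg m.cast_nonneg
      (add_nonneg (mul_nonneg hω0 H.cast_nonneg) (mul_nonneg hη0 W.cast_nonneg))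
  rw [← sum_sdiff (subset_univ S)] at harea
  rcases hcover with rfl | hcover
  · simpa using hloss.trans hslack
  · linarith

/-- Packing the small rectangles (core of Lemma 6.1): given rectangular regions
`B_1,…,B_m` with pairwise disjoint interiors inside `[0,W]×[0,H]` and a family `S` of
small rectangles (width at most `μ_w·W`, height at most `μ_h·H`) of total area at most the
total area of the regions, a subfamily `S'` of `S` can be feasibly packed inside the
regions so that the unpacked area satisfies
`a(S ∖ S') ≤ m·(μ_w·μ_h·W·H + μ_h·H·W + μ_w·W·H)`. -/
theorem small_rectangles_packing
    (W H : ℕ) (hW : 0 < W) (hH : 0 < H)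
    (μw μh : ℝ) (hμw : μw ∈ Set.Ioo (0 : ℝ) 1) (hμh : μh ∈ Set.Ioo (0 : ℝ) 1)
    (m : ℕ) (bx bY bw bh : ℕ → ℝ)
    (hreg : ∀ k < m, 0 ≤ bx k ∧ 0 ≤ bY k ∧ 0 ≤ bw k ∧ 0 ≤ bh k ∧
      bx k + bw k ≤ W ∧ bY k + bh k ≤ H)
    (hdisj : ∀ k < m, ∀ k' < m, k ≠ k' →
      RegionDisjoint (bx k) (bY k) (bw k) (bh k) (bx k') (bY k') (bw k') (bh k'))
    (ι : Type*) [Fintype ι] (w h : ι → ℕ) (hpos : ∀ i, 0 < w i ∧ 0 < h i)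
    (hsmall : ∀ i, (w i : ℝ) ≤ μw * W ∧ (h i : ℝ) ≤ μh * H)
    (harea : (∑ i, (w i : ℝ) * h i) ≤ ∑ k ∈ Finset.range m, bw k * bh k) :
    ∃ (S : Finset ι) (x y : ι → ℝ) (c : ι → ℕ),
      (∀ i ∈ S, c i < m ∧
        bx (c i) ≤ x i ∧ x i + w i ≤ bx (c i) + bw (c i) ∧
        bY (c i) ≤ y i ∧ y i + h i ≤ bY (c i) + bh (c i)) ∧
      (∀ i ∈ S, ∀ j ∈ S, i ≠ j →
        RectDisjointR (x i) (y i) (w i) (h i) (x j) (y j) (w j) (h j)) ∧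
      (∑ i ∈ Finset.univ \ S, (w i : ℝ) * h i) ≤
        m * (μw * μh * W * H + μh * H * W + μw * W * H) :=
  small_rectangles_packing_general W H μw μh hμw hμh m bx bY bw bh hreg hdisj ι w h hsmall harea
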